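/- arXiv:1312.0197 — 3 statements merged into one kernel-verified Lean document; each statement's English description precedes it below -/
import Mathlib

section
/- Let c < 0 and for ε > 0 small define α(ε) = [(c² - ρ(ε)² + 1) - √((c² - ρ(ε)² + 1)² - 4c²)]·c/(2c²) where ρ(ε) = c + 1/(1+ε) (assume 0 < ρ(ε), i.e., c > -1/(1+ε)). Then α(ε) = -1 + β√ε + O(ε) as ε → 0⁺, where β = √(2(c+1)/|c|). -/
set_option maxHeartbeats 1000000

/-- With `-1 < c < 0`, `ρ(ε) = c + 1/(1+ε)` and
`α(ε) = [(c² - ρ(ε)² + 1) - √((c² - ρ(ε)² + 1)² - 4c²)]·c/(2c²)`, one has `ρ(ε) > 0` and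
`α(ε) = -1 + β√ε + O(ε)` as `ε → 0⁺`, where `β = √(2(c+1)/|c|)`. -/
theorem stmt10 (c : ℝ) (hc : -1 < c) (hc0 : c < 0) :
    ∃ C > 0, ∃ ε₀ > 0, ∀ ε : ℝ, 0 < ε → ε < ε₀ →
      0 < c + 1 / (1 + ε) ∧
      |((c ^ 2 - (c + 1 / (1 + ε)) ^ 2 + 1
          - Real.sqrt ((c ^ 2 - (c + 1 / (1 + ε)) ^ 2 + 1) ^ 2 - 4 * c ^ 2)) * c / (2 * c ^ 2))
        - (-1 + Real.sqrt (2 * (c + 1) / |c|) * Real.sqrt ε)| ≤ C * ε := by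
  have hcne : c ≠ 0 := ne_of_lt hc0
  have hc1 : 0 < c + 1 := by linarith
  set p : ℝ → ℝ := fun x =>
    (2 + x) * (2 * (c + 1) + x * (1 + 2 * c)) * (-2 * c + x * (1 - 2 * c)) / (1 + x) ^ 4
    with hp
  have hp0 : p 0 = -8 * c * (c + 1) := by simp [hp]; ring
  have hp0pos : 0 < p 0 := by rw [hp0]; nlinarith
  set g : ℝ → ℝ := fun x => Real.sqrt (p x) with hgdef
  -- differentiability of g at 0
  have hdiffp : DifferentiableAt ℝ p 0 := by
    apply DifferentiableAt.div
    · fun_prop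
    · fun_prop
    · norm_num
  have hdiffg : DifferentiableAt ℝ g 0 := hdiffp.sqrt (ne_of_gt hp0pos)
  have hO := hdiffg.isBigO_sub
  rw [Asymptotics.isBigO_iff] at hO
  obtain ⟨C₁, hC₁⟩ := hO
  rw [Metric.eventually_nhds_iff] at hC₁
  obtain ⟨δ, hδpos, hC₁⟩ := hC₁
  set C₁' : ℝ := max C₁ 1 with hC₁'def
  have hC₁'pos : 0 < C₁' := lt_of_lt_of_le one_pos (le_max_right _ _)
  refine ⟨(3 + C₁') / (2 * (-c)), div_pos (by linarith) (by linarith), min δ (min 1 ((c + 1) / (-c))),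
    lt_min hδpos (lt_min one_pos (div_pos hc1 (by linarith))), fun ε hε hεlt => ?_⟩
  have hε1 : ε < 1 := lt_of_lt_of_le hεlt (le_trans (min_le_right _ _) (min_le_left _ _))
  have hεδ : ε < δ := lt_of_lt_of_le hεlt (min_le_left _ _)
  have hεc : ε < (c + 1) / (-c) :=
    lt_of_lt_of_le hεlt (le_trans (min_le_right _ _) (min_le_right _ _))
  have h1e : (0 : ℝ) < 1 + ε := by linarith
  have hnum : 0 < c * (1 + ε) + 1 := by
    have := (lt_div_iff₀ (by linarith : (0:ℝ) < -c)).mp hεc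
    nlinarith
  have hρ : 0 < c + 1 / (1 + ε) := by
    have : c + 1 / (1 + ε) = (c * (1 + ε) + 1) / (1 + ε) := by field_simp
    rw [this]; positivity
  refine ⟨hρ, ?_⟩
  set q : ℝ := (2 * (c + 1) + ε * (1 + 2 * c)) / (1 + ε) ^ 2 with hq
  have h1e' : (1 + ε) ≠ 0 := ne_of_gt h1e
  -- identity for A + 2c
  have idA : c ^ 2 - (c + 1 / (1 + ε)) ^ 2 + 1 = ε * q - 2 * c := by
    rw [hq]; field_simp; ring
  -- identity for A² - 4c²
  have idD : (c ^ 2 - (c + 1 / (1 + ε)) ^ 2 + 1) ^ 2 - 4 * c ^ 2 = ε * p ε := by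
    rw [hp]; field_simp; ring
  have sqrtD : Real.sqrt ((c ^ 2 - (c + 1 / (1 + ε)) ^ 2 + 1) ^ 2 - 4 * c ^ 2)
      = Real.sqrt ε * g ε := by
    rw [idD, Real.sqrt_mul hε.le]
  -- g 0 in terms of β
  have hg0 : g 0 = (-2 * c) * Real.sqrt (2 * (c + 1) / |c|) := by
    have h1 : p 0 = (-2 * c) ^ 2 * (2 * (c + 1) / |c|) := by
      rw [hp0, abs_of_neg hc0, ← mul_div_assoc, eq_div_iff (by linarith : -c ≠ 0)]; ring
    show Real.sqrt (p 0) = _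
    rw [h1, Real.sqrt_mul (by positivity), Real.sqrt_sq (by linarith)]
  have hβ : Real.sqrt (2 * (c + 1) / |c|) = g 0 / (-2 * c) := by
    rw [hg0]; field_simp
  -- bound on |q|
  have hqnum : |2 * (c + 1) + ε * (1 + 2 * c)| ≤ 3 := by
    rw [abs_le]; constructor <;> nlinarith
  have hqb : |q| ≤ 3 := by
    rw [hq, abs_div, abs_of_pos (pow_pos h1e 2), div_le_iff₀ (pow_pos h1e 2)]
    nlinarith
  -- bound on |g ε - g 0| from differentiability
  have hgb : |g ε - g 0| ≤ C₁' * ε := by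
    have h1 := hC₁ (show dist ε 0 < δ by rw [Real.dist_eq, sub_zero, abs_of_pos hε]; exact hεδ)
    simp only [Real.norm_eq_abs, sub_zero, abs_of_pos hε] at h1
    calc |g ε - g 0| ≤ C₁ * ε := h1
      _ ≤ C₁' * ε := by
          apply mul_le_mul_of_nonneg_right (le_max_left _ _) hε.le
  clear_value g
  clear_value p
  clear_value q
  -- rewrite the main expression
  have key : ((c ^ 2 - (c + 1 / (1 + ε)) ^ 2 + 1
        - Real.sqrt ((c ^ 2 - (c + 1 / (1 + ε)) ^ 2 + 1) ^ 2 - 4 * c ^ 2)) * c / (2 * c ^ 2))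
      - (-1 + Real.sqrt (2 * (c + 1) / |c|) * Real.sqrt ε)
      = ε * q / (2 * c) - Real.sqrt ε * (g ε - g 0) / (2 * c) := by
    rw [sqrtD, idA, hβ]
    field_simp
    ring
  rw [key]
  have h2c : |2 * c| = 2 * (-c) := by rw [abs_of_neg (by linarith : 2 * c < 0)]; ring
  have hcpos : (0 : ℝ) < 2 * (-c) := by linarith
  have hsq1 : Real.sqrt ε ≤ 1 := by
    rw [show (1:ℝ) = Real.sqrt 1 by simp]
    exact Real.sqrt_le_sqrt hε1.le
  have hb1 : |ε * q / (2 * c)| ≤ 3 * ε / (2 * (-c)) := by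
    rw [abs_div, abs_mul, abs_of_pos hε, h2c]
    apply div_le_div₀ (by positivity) (by nlinarith [abs_nonneg q]) hcpos le_rfl
  have hb2 : |Real.sqrt ε * (g ε - g 0) / (2 * c)| ≤ C₁' * ε / (2 * (-c)) := by
    rw [abs_div, abs_mul, h2c]
    apply div_le_div₀ (by positivity) ?_ hcpos le_rfl
    calc |Real.sqrt ε| * |g ε - g 0| ≤ 1 * (C₁' * ε) := by
          apply mul_le_mul _ hgb (abs_nonneg _) one_pos.le
          rwa [abs_of_nonneg (Real.sqrt_nonneg _)]
      _ = C₁' * ε := one_mul _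
  calc |ε * q / (2 * c) - Real.sqrt ε * (g ε - g 0) / (2 * c)|
      ≤ |ε * q / (2 * c)| + |Real.sqrt ε * (g ε - g 0) / (2 * c)| := abs_sub _ _
    _ ≤ 3 * ε / (2 * (-c)) + C₁' * ε / (2 * (-c)) := add_le_add hb1 hb2
    _ = (3 + C₁') / (2 * (-c)) * ε := by field_simp; ring
end

section
/- Let m ≥ 1 be an integer and let x₁ : (-δ₀, δ₀) → ℝ be a function satisfying -c₁ y^{2m} ≤ x₁(y) ≤ -c₂ y^{2m} for all |y| < δ₀, with constants c₁ ≥ c₂ > 0. For y ≠ 0 define η(y) = -y/(y² + x₁(y)²) and ψ(y) = x₁(y)/(y² + x₁(y)²). Then there exist constants C₁ > 0 and L > 0 such that for all y ≠ 0 with |η(y)| > L, ψ(y) ≤ -C₁ |η(y)|^{2-2m}. -/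
/-- Under the inversion `z ↦ 1/z`, a curve `x = x₁(y)` with contact of order `2m` at the
origin (`-c₁ y^{2m} ≤ x₁(y) ≤ -c₂ y^{2m}`) maps to a curve `ξ = ψ(η)` with
`ψ(η) ≤ -C₁ |η|^{2-2m}` for `|η|` large, where `η(y) = -y/(y² + x₁(y)²)` and
`ψ(y) = x₁(y)/(y² + x₁(y)²)`. -/
theorem stmt12 (m : ℕ) (hm : 1 ≤ m) (δ₀ c₁ c₂ : ℝ) (hδ₀ : 0 < δ₀) (hc₂ : 0 < c₂) (hc₁ : c₂ ≤ c₁)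
    (x₁ : ℝ → ℝ)
    (hx : ∀ y : ℝ, |y| < δ₀ → -c₁ * y ^ (2 * m) ≤ x₁ y ∧ x₁ y ≤ -c₂ * y ^ (2 * m)) :
    ∃ C₁ > 0, ∃ L > 0, ∀ y : ℝ, y ≠ 0 →
      L < |(-y) / (y ^ 2 + (x₁ y) ^ 2)| →
      x₁ y / (y ^ 2 + (x₁ y) ^ 2) ≤
        -C₁ * |(-y) / (y ^ 2 + (x₁ y) ^ 2)| ^ ((2 : ℝ) - 2 * m) := by
  obtain ⟨k, rfl⟩ : ∃ k, m = k + 1 := ⟨m - 1, by omega⟩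
  have hc₁0 : 0 < c₁ := lt_of_lt_of_le hc₂ hc₁
  set K : ℝ := 1 + c₁ ^ 2 * δ₀ ^ (4 * k + 2) with hKdef
  have hK0 : (0:ℝ) < K := by positivity
  refine ⟨c₂ / K ^ (2 * k + 1), by positivity, 1 / δ₀, by positivity, ?_⟩
  intro y hy hL
  have hy2 : (0:ℝ) < y ^ 2 := by positivity
  have hD : (0:ℝ) < y ^ 2 + x₁ y ^ 2 := by positivity
  have habs : |(-y) / (y ^ 2 + x₁ y ^ 2)| = |y| / (y ^ 2 + x₁ y ^ 2) := by
    rw [abs_div, abs_neg, abs_of_pos hD]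
  have hyabs : 0 < |y| := abs_pos.mpr hy
  have hysq : |y| * |y| = y ^ 2 := by rw [← abs_mul, abs_mul_self]; ring
  have hyδ : |y| < δ₀ := by
    rw [habs] at hL
    have h1 : |y| / (y ^ 2 + x₁ y ^ 2) ≤ 1 / |y| := by
      rw [div_le_div_iff₀ hD hyabs]
      nlinarith [sq_nonneg (x₁ y)]
    have h2 := lt_of_lt_of_le hL h1
    rw [div_lt_div_iff₀ hδ₀ hyabs] at h2
    linarith
  obtain ⟨hx1, hx2⟩ := hx y hyδ
  rw [habs]
  have hexp : (2:ℝ) - 2 * ((k+1 : ℕ) : ℝ) = -((2*k : ℕ) : ℝ) := by push_cast; ring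
  rw [hexp, Real.rpow_neg (by positivity), Real.rpow_natCast]
  -- bound D ≤ K y²
  have hyev : ∀ n : ℕ, y ^ (2 * n) = |y| ^ (2 * n) := by
    intro n
    rw [pow_mul, pow_mul, ← hysq]; ring_nf
  have hybound : y ^ (4 * k + 2) ≤ δ₀ ^ (4 * k + 2) := by
    have : y ^ (4 * k + 2) = |y| ^ (4 * k + 2) := by
      have := hyev (2 * k + 1); rw [show 2*(2*k+1) = 4*k+2 by ring] at this; exact this
    rw [this]
    exact pow_le_pow_left₀ (abs_nonneg y) hyδ.le _
  have hx1sq : x₁ y ^ 2 ≤ c₁ ^ 2 * y ^ (4 * k + 4) := by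
    have h1 : x₁ y ≤ c₁ * y ^ (2 * (k + 1)) := by
      have : (0:ℝ) ≤ c₂ * y ^ (2 * (k + 1)) := by
        have : y ^ (2 * (k+1)) = |y| ^ (2 * (k+1)) := hyev (k+1)
        rw [this]; positivity
      nlinarith
    have h2 : -(c₁ * y ^ (2 * (k + 1))) ≤ x₁ y := by linarith
    have := sq_le_sq' h2 h1
    calc x₁ y ^ 2 ≤ (c₁ * y ^ (2 * (k+1))) ^ 2 := this
      _ = c₁ ^ 2 * y ^ (4 * k + 4) := by rw [mul_pow, ← pow_mul]; ring_nf
  have hDK : y ^ 2 + x₁ y ^ 2 ≤ K * y ^ 2 := by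
    have h3 : y ^ (4 * k + 4) = y ^ 2 * y ^ (4 * k + 2) := by
      rw [← pow_add]; ring_nf
    have h4 : y ^ 2 * y ^ (4 * k + 2) ≤ y ^ 2 * δ₀ ^ (4 * k + 2) := by
      exact mul_le_mul_of_nonneg_left hybound hy2.le
    rw [hKdef]
    nlinarith [hx1sq]
  have hDpow : (y ^ 2 + x₁ y ^ 2) ^ (2 * k + 1) ≤ K ^ (2 * k + 1) * y ^ (4 * k + 2) := by
    calc (y ^ 2 + x₁ y ^ 2) ^ (2 * k + 1) ≤ (K * y ^ 2) ^ (2 * k + 1) :=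
          pow_le_pow_left₀ hD.le hDK _
      _ = K ^ (2 * k + 1) * y ^ (4 * k + 2) := by rw [mul_pow, ← pow_mul]; ring_nf
  -- now the main inequality
  have key : c₂ / K ^ (2 * k + 1) * ((|y| / (y ^ 2 + x₁ y ^ 2)) ^ (2 * k))⁻¹
      ≤ c₂ * y ^ (2 * (k + 1)) / (y ^ 2 + x₁ y ^ 2) := by
    rw [div_pow, inv_div, div_mul_div_comm, div_le_div_iff₀ (by positivity) hD]
    have heq : c₂ * y ^ (2 * (k+1)) * (K ^ (2*k+1) * |y| ^ (2*k))
        = c₂ * K ^ (2*k+1) * (|y| ^ (4*k+2)) := by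
      rw [hyev (k+1)]
      rw [show (4*k+2) = 2*(k+1) + 2*k by ring, pow_add]; ring
    rw [heq]
    have h6 : y ^ (4 * k + 2) = |y| ^ (4 * k + 2) := by
      have := hyev (2 * k + 1); rw [show 2*(2*k+1) = 4*k+2 by ring] at this; exact this
    calc c₂ * (y ^ 2 + x₁ y ^ 2) ^ (2 * k) * (y ^ 2 + x₁ y ^ 2)
        = c₂ * (y ^ 2 + x₁ y ^ 2) ^ (2 * k + 1) := by ring
      _ ≤ c₂ * (K ^ (2 * k + 1) * y ^ (4 * k + 2)) :=
          mul_le_mul_of_nonneg_left hDpow hc₂.le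
      _ = c₂ * K ^ (2*k+1) * (|y| ^ (4*k+2)) := by rw [h6]; ring
  have hfin : x₁ y / (y ^ 2 + x₁ y ^ 2) ≤ -(c₂ * y ^ (2 * (k + 1)) / (y ^ 2 + x₁ y ^ 2)) := by
    rw [div_le_iff₀ hD, neg_mul, div_mul_cancel₀ _ hD.ne']
    linarith
  calc x₁ y / (y ^ 2 + x₁ y ^ 2)
      ≤ -(c₂ * y ^ (2 * (k + 1)) / (y ^ 2 + x₁ y ^ 2)) := hfin
    _ ≤ -(c₂ / K ^ (2 * k + 1) * ((|y| / (y ^ 2 + x₁ y ^ 2)) ^ (2 * k))⁻¹) := by linarith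
    _ = -(c₂ / K ^ (2 * k + 1)) * ((|y| / (y ^ 2 + x₁ y ^ 2)) ^ (2 * k))⁻¹ := by ring
end

section
/- Let U be a bounded continuous function on the closure of the half-strip R̃ = (0, π) × (0, ∞) (coordinates (ξ, η)), harmonic in R̃, vanishing on the two lateral sides {0} × [0,∞) and {π} × [0,∞), and with boundary data φ(ξ) = U(ξ, 0) bounded on [0, π]. Then there exist constants A > 0 and C > 0 such that |U(ξ, η)| ≤ C e^{-Aη} for all (ξ, η) ∈ R̃ with η > 0. -/
open Real

/-- `u` is harmonic on `s ⊆ ℝ²`: twice continuously differentiable with vanishing Laplacian. -/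
def HarmonicOn (u : ℝ × ℝ → ℝ) (s : Set (ℝ × ℝ)) : Prop :=
  ContDiffOn ℝ 2 u s ∧ ∀ p ∈ s,
    (fderiv ℝ (fun q => fderiv ℝ u q (1, 0)) p) (1, 0) +
      (fderiv ℝ (fun q => fderiv ℝ u q (0, 1)) p) (0, 1) = 0

/-!
The function `B(ξ, η) = cos (ξ/2 - π/4) e^{-η/2}` is harmonic and satisfies
`√2/2 · e^{-η/2} ≤ B ≤ e^{-η/2}` on the half-strip. If `±U ≤ M`, then on the rectangle
`(0, π) × (0, H)` the harmonic function `±U - √2 M B - ε η` is `≤ 0` on the boundary as soon as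
`H ≥ M / ε` (the term `ε η`, as in the Phragmén–Lindelöf argument, takes care of the top side),
hence `≤ 0` inside by the weak maximum principle. Letting `ε → 0` gives `|U| ≤ √2 M e^{-η/2}`.
The weak maximum principle comes from the second-derivative test at an interior maximum after
adding `δ e^{ξ + η}`, whose Laplacian is positive.
-/

open Filter Topology Set

lemma IsLocalMax.deriv_deriv_nonpos {f : ℝ → ℝ} {x : ℝ} (h : IsLocalMax f x)
    (hc : ContinuousAt f x) : deriv (deriv f) x ≤ 0 := by
  by_contra! hpos
  have hconst : f =ᶠ[𝓝 x] fun _ => f x :=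
    (h.and (isLocalMin_of_deriv_deriv_pos hpos h.deriv_eq_zero hc)).mono
      fun y hy => le_antisymm hy.1 hy.2
  have hderiv : deriv f =ᶠ[𝓝 x] fun _ => 0 := by
    simpa using hconst.deriv
  simp [hderiv.deriv_eq] at hpos

section
variable {E : Type*} [NormedAddCommGroup E] [NormedSpace ℝ E] {u w : E → ℝ} {p : E}

lemma ContDiffAt.differentiableAt_fderiv_apply (hu : ContDiffAt ℝ 2 u p) (v : E) :
    DifferentiableAt ℝ (fun q => fderiv ℝ u q v) p :=
  ((hu.fderiv_right (m := 1) (by norm_num)).clm_apply contDiffAt_const).differentiableAt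
    (by norm_num)

lemma fderiv_fderiv_apply_add (hu : ContDiffAt ℝ 2 u p) (hw : ContDiffAt ℝ 2 w p) (v : E) :
    fderiv ℝ (fun q => fderiv ℝ (u + w) q v) p v =
      fderiv ℝ (fun q => fderiv ℝ u q v) p v + fderiv ℝ (fun q => fderiv ℝ w q v) p v := by
  have hfirst : (fun q => fderiv ℝ (u + w) q v) =ᶠ[𝓝 p]
      (fun q => fderiv ℝ u q v) + fun q => fderiv ℝ w q v := by
    filter_upwards [hu.eventually (by simp), hw.eventually (by simp)] with q hqu hqw
    simp [fderiv_add (hqu.differentiableAt (by norm_num)) (hqw.differentiableAt (by norm_num))]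
  rw [hfirst.fderiv_eq,
    fderiv_add (hu.differentiableAt_fderiv_apply v) (hw.differentiableAt_fderiv_apply v)]
  rfl

lemma fderiv_fderiv_apply_const_smul (c : ℝ) (v : E) :
    fderiv ℝ (fun q => fderiv ℝ (c • u) q v) p v = c * fderiv ℝ (fun q => fderiv ℝ u q v) p v := by
  have hfirst : (fun q => fderiv ℝ (c • u) q v) = c • fun q => fderiv ℝ u q v := by
    ext q; simp [fderiv_const_smul_field]
  rw [hfirst, fderiv_const_smul_field]
  rfl

lemma IsLocalMax.fderiv_fderiv_apply_self_nonpos (h : IsLocalMax u p) (hu : ContDiffAt ℝ 2 u p)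
    (v : E) : fderiv ℝ (fun q => fderiv ℝ u q v) p v ≤ 0 := by
  set ℓ : ℝ → E := fun t => p + t • v
  have hℓ : ∀ t, HasDerivAt ℓ v t := fun t => by
    simpa only [id, one_smul] using ((hasDerivAt_id t).smul_const v).const_add p
  have hℓ0 : ℓ 0 = p := by simp [ℓ]
  have hℓc : Continuous ℓ := by fun_prop
  have hdiff : ∀ᶠ t in 𝓝 (0 : ℝ), DifferentiableAt ℝ u (ℓ t) := by
    refine (hℓc.tendsto 0).eventually ?_
    rw [hℓ0]
    exact (hu.eventually (by simp)).mono fun q hq => hq.differentiableAt (by norm_num)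
  have hderiv : deriv (u ∘ ℓ) =ᶠ[𝓝 0] fun t => fderiv ℝ u (ℓ t) v :=
    hdiff.mono fun t ht => (ht.hasFDerivAt.comp_hasDerivAt t (hℓ t)).deriv
  have hsecond : HasDerivAt (fun t => fderiv ℝ u (ℓ t) v)
      (fderiv ℝ (fun q => fderiv ℝ u q v) p v) 0 :=
    (hu.differentiableAt_fderiv_apply v).hasFDerivAt.comp_hasDerivAt_of_eq 0 (hℓ 0) hℓ0.symm
  have hmax : IsLocalMax (u ∘ ℓ) 0 := by
    rw [← hℓ0] at h
    exact h.comp_continuous hℓc.continuousAt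
  rw [← (hsecond.congr_of_eventuallyEq hderiv).deriv]
  exact hmax.deriv_deriv_nonpos (hu.continuousAt.comp_of_eq hℓc.continuousAt hℓ0)

end

noncomputable def planeLaplacian (u : ℝ × ℝ → ℝ) (p : ℝ × ℝ) : ℝ :=
  fderiv ℝ (fun q => fderiv ℝ u q (1, 0)) p (1, 0) +
    fderiv ℝ (fun q => fderiv ℝ u q (0, 1)) p (0, 1)

theorem harmonicOn_iff {u : ℝ × ℝ → ℝ} {s : Set (ℝ × ℝ)} :
    HarmonicOn u s ↔ ContDiffOn ℝ 2 u s ∧ ∀ p ∈ s, planeLaplacian u p = 0 :=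
  Iff.rfl

section
variable {f f' f'' g g' g'' : ℝ → ℝ}

lemma fderiv_mul_comp_fst_snd_apply (hf : ∀ x, HasDerivAt f (f' x) x)
    (hg : ∀ y, HasDerivAt g (g' y) y) (q : ℝ × ℝ) (a b : ℝ) :
    fderiv ℝ (fun q : ℝ × ℝ => f q.1 * g q.2) q (a, b) =
      a * f' q.1 * g q.2 + b * f q.1 * g' q.2 := by
  have hfst : HasFDerivAt (fun q : ℝ × ℝ => f q.1) (f' q.1 • ContinuousLinearMap.fst ℝ ℝ ℝ) q :=
    (hf q.1).comp_hasFDerivAt q hasFDerivAt_fst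
  have hsnd : HasFDerivAt (fun q : ℝ × ℝ => g q.2) (g' q.2 • ContinuousLinearMap.snd ℝ ℝ ℝ) q :=
    (hg q.2).comp_hasFDerivAt q hasFDerivAt_snd
  rw [(hfst.fun_mul hsnd).fderiv]
  simp only [add_apply, smul_apply, ContinuousLinearMap.coe_snd', smul_eq_mul,
    ContinuousLinearMap.coe_fst']
  ring

lemma planeLaplacian_mul_comp_fst_snd (hf : ∀ x, HasDerivAt f (f' x) x)
    (hf' : ∀ x, HasDerivAt f' (f'' x) x) (hg : ∀ y, HasDerivAt g (g' y) y)
    (hg' : ∀ y, HasDerivAt g' (g'' y) y) (p : ℝ × ℝ) :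
    planeLaplacian (fun q => f q.1 * g q.2) p = f'' p.1 * g p.2 + f p.1 * g'' p.2 := by
  have h₁ : (fun q => fderiv ℝ (fun q : ℝ × ℝ => f q.1 * g q.2) q (1, 0)) =
      fun q => f' q.1 * g q.2 := by
    ext q; simp [fderiv_mul_comp_fst_snd_apply hf hg]
  have h₂ : (fun q => fderiv ℝ (fun q : ℝ × ℝ => f q.1 * g q.2) q (0, 1)) =
      fun q => f q.1 * g' q.2 := by
    ext q; simp [fderiv_mul_comp_fst_snd_apply hf hg]
  rw [planeLaplacian, h₁, h₂, fderiv_mul_comp_fst_snd_apply hf' hg,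
    fderiv_mul_comp_fst_snd_apply hf hg']
  ring

end

section
variable {u w : ℝ × ℝ → ℝ} {s : Set (ℝ × ℝ)}

lemma planeLaplacian_add {p : ℝ × ℝ} (hu : ContDiffAt ℝ 2 u p) (hw : ContDiffAt ℝ 2 w p) :
    planeLaplacian (u + w) p = planeLaplacian u p + planeLaplacian w p := by
  simp only [planeLaplacian, fderiv_fderiv_apply_add hu hw]
  ring

lemma planeLaplacian_const_smul (c : ℝ) (p : ℝ × ℝ) :
    planeLaplacian (c • u) p = c * planeLaplacian u p := by
  simp only [planeLaplacian, fderiv_fderiv_apply_const_smul]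
  ring

lemma HarmonicOn.mono {t : Set (ℝ × ℝ)} (hu : HarmonicOn u s) (hts : t ⊆ s) : HarmonicOn u t :=
  ⟨hu.1.mono hts, fun p hp => hu.2 p (hts hp)⟩

lemma HarmonicOn.add (hs : IsOpen s) (hu : HarmonicOn u s) (hw : HarmonicOn w s) :
    HarmonicOn (u + w) s := by
  refine harmonicOn_iff.2 ⟨hu.1.add hw.1, fun p hp => ?_⟩
  rw [planeLaplacian_add (hu.1.contDiffAt (hs.mem_nhds hp)) (hw.1.contDiffAt (hs.mem_nhds hp)),
    (harmonicOn_iff.1 hu).2 p hp, (harmonicOn_iff.1 hw).2 p hp, add_zero]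

lemma HarmonicOn.const_smul (hu : HarmonicOn u s) (c : ℝ) : HarmonicOn (c • u) s := by
  refine harmonicOn_iff.2 ⟨hu.1.const_smul c, fun p hp => ?_⟩
  rw [planeLaplacian_const_smul, (harmonicOn_iff.1 hu).2 p hp, mul_zero]

lemma HarmonicOn.sub (hs : IsOpen s) (hu : HarmonicOn u s) (hw : HarmonicOn w s) :
    HarmonicOn (u - w) s := by
  simpa [sub_eq_add_neg] using hu.add hs (hw.const_smul (-1))

lemma IsLocalMax.planeLaplacian_nonpos {p : ℝ × ℝ} (h : IsLocalMax u p) (hu : ContDiffAt ℝ 2 u p) :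
    planeLaplacian u p ≤ 0 :=
  add_nonpos (h.fderiv_fderiv_apply_self_nonpos hu _) (h.fderiv_fderiv_apply_self_nonpos hu _)

end

lemma harmonicOn_snd (s : Set (ℝ × ℝ)) : HarmonicOn Prod.snd s := by
  refine ⟨contDiff_snd.contDiffOn, fun p _ => ?_⟩
  simp [fderiv_snd]

noncomputable def halfStripBarrier (p : ℝ × ℝ) : ℝ := cos (p.1 / 2 - π / 4) * exp (-(p.2 / 2))

lemma harmonicOn_halfStripBarrier (s : Set (ℝ × ℝ)) : HarmonicOn halfStripBarrier s := by
  refine harmonicOn_iff.2 ⟨by unfold halfStripBarrier; fun_prop, fun p _ => ?_⟩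
  have hx : ∀ x : ℝ, HasDerivAt (fun x => x / 2 - π / 4) (1 / 2) x := fun x => by
    simpa using ((hasDerivAt_id' x).div_const 2).sub_const (π / 4)
  have hy : ∀ y : ℝ, HasDerivAt (fun y => -(y / 2)) (-(1 / 2)) y := fun y => by
    simpa using ((hasDerivAt_id' y).div_const 2).fun_neg
  have hf : ∀ x, HasDerivAt (fun x => cos (x / 2 - π / 4)) (-sin (x / 2 - π / 4) / 2) x :=
    fun x => (hx x).cos.congr_deriv (by ring)
  have hf' : ∀ x, HasDerivAt (fun x => -sin (x / 2 - π / 4) / 2) (-cos (x / 2 - π / 4) / 4) x :=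
    fun x => ((hx x).sin.fun_neg.div_const 2).congr_deriv (by ring)
  have hg : ∀ y, HasDerivAt (fun y => exp (-(y / 2))) (-exp (-(y / 2)) / 2) y :=
    fun y => (hy y).exp.congr_deriv (by ring)
  have hg' : ∀ y, HasDerivAt (fun y => -exp (-(y / 2)) / 2) (exp (-(y / 2)) / 4) y :=
    fun y => ((hy y).exp.fun_neg.div_const 2).congr_deriv (by ring)
  have := planeLaplacian_mul_comp_fst_snd hf hf' hg hg' p
  exact this.trans (by ring)

section
variable {u : ℝ × ℝ → ℝ} {Ω : Set (ℝ × ℝ)} {m : ℝ}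

lemma le_on_closure_of_planeLaplacian_pos (hΩ : IsOpen Ω) (hb : Bornology.IsBounded Ω)
    (hc : ContinuousOn u (closure Ω)) (hu : ContDiffOn ℝ 2 u Ω)
    (hlap : ∀ p ∈ Ω, 0 < planeLaplacian u p) (hm : ∀ p ∈ frontier Ω, u p ≤ m) :
    ∀ p ∈ closure Ω, u p ≤ m := by
  intro p hp
  obtain ⟨q, hqΩ, hqmax⟩ := hb.isCompact_closure.exists_isMaxOn ⟨p, hp⟩ hc
  by_cases hq : q ∈ Ω
  · have hloc : IsLocalMax u q :=
      hqmax.isLocalMax (mem_of_superset (hΩ.mem_nhds hq) subset_closure)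
    exact absurd (hloc.planeLaplacian_nonpos (hu.contDiffAt (hΩ.mem_nhds hq)))
      (hlap q hq).not_ge
  · exact (hqmax hp).trans (hm q (hΩ.frontier_eq ▸ ⟨hqΩ, hq⟩))

theorem HarmonicOn.le_on_closure (hΩ : IsOpen Ω) (hb : Bornology.IsBounded Ω)
    (hu : HarmonicOn u Ω) (hc : ContinuousOn u (closure Ω)) (hm : ∀ p ∈ frontier Ω, u p ≤ m) :
    ∀ p ∈ closure Ω, u p ≤ m := by
  intro p hp
  set e : ℝ × ℝ → ℝ := fun q => exp q.1 * exp q.2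
  have he : ∀ q, 0 < planeLaplacian e q := fun q => by
    rw [planeLaplacian_mul_comp_fst_snd hasDerivAt_exp hasDerivAt_exp hasDerivAt_exp
      hasDerivAt_exp]
    positivity
  obtain ⟨R, hR⟩ := hb.isCompact_closure.exists_bound_of_continuousOn
    (f := e) (by fun_prop)
  have hR0 : 0 ≤ R := (norm_nonneg _).trans (hR p hp)
  have he_le : ∀ q ∈ closure Ω, e q ≤ R := fun q hq => (le_abs_self _).trans (hR q hq)
  refine le_of_forall_pos_le_add fun ε hε => ?_
  set δ := ε / (R + 1)
  have hδ : 0 < δ := by positivity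
  have hpert := le_on_closure_of_planeLaplacian_pos (u := u + δ • e) (m := m + δ * R) hΩ hb
    (hc.add (by fun_prop)) (hu.1.add (by fun_prop))
    (fun q hq => by
      rw [planeLaplacian_add (hu.1.contDiffAt (hΩ.mem_nhds hq)) (by fun_prop),
        planeLaplacian_const_smul, (harmonicOn_iff.1 hu).2 q hq, zero_add]
      exact mul_pos hδ (he q))
    (fun q hq => add_le_add (hm q hq)
      (mul_le_mul_of_nonneg_left (he_le q (frontier_subset_closure hq)) hδ.le))
    p hp
  have hδR : δ * R ≤ ε := by
    rw [div_mul_eq_mul_div, div_le_iff₀ (by positivity)]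
    nlinarith
  have hep : 0 < e p := by positivity
  simp only [Pi.add_apply, Pi.smul_apply, smul_eq_mul] at hpert
  nlinarith

end

lemma halfStripBarrier_bounds {p : ℝ × ℝ} (hp : p.1 ∈ Icc 0 π) :
    √2 / 2 * exp (-(p.2 / 2)) ≤ halfStripBarrier p ∧ halfStripBarrier p ≤ exp (-(p.2 / 2)) := by
  have hcos : √2 / 2 ≤ cos (p.1 / 2 - π / 4) := by
    rw [← cos_pi_div_four, ← cos_abs (p.1 / 2 - π / 4)]
    exact cos_le_cos_of_nonneg_of_le_pi (abs_nonneg _) (by linarith [pi_pos])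
      (abs_le.2 ⟨by linarith [hp.1], by linarith [hp.2]⟩)
  exact ⟨mul_le_mul_of_nonneg_right hcos (exp_pos _).le,
    mul_le_of_le_one_left (exp_pos _).le (cos_le_one _)⟩

section
variable {v : ℝ × ℝ → ℝ} {M : ℝ}

lemma HarmonicOn.le_halfStripBarrier_add (hc : ContinuousOn v (Icc 0 π ×ˢ Ici 0))
    (hv : HarmonicOn v (Ioo 0 π ×ˢ Ioi 0)) (hle : ∀ p ∈ Icc 0 π ×ˢ Ici 0, v p ≤ M)
    (hside : ∀ η : ℝ, 0 ≤ η → v (0, η) = 0 ∧ v (π, η) = 0) {ε : ℝ} (hε : 0 < ε)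
    {p : ℝ × ℝ} (hp : p ∈ Ioo 0 π ×ˢ Ioi 0) :
    v p ≤ √2 * M * halfStripBarrier p + ε * p.2 := by
  have hM : 0 ≤ M := (hside 0 le_rfl).1 ▸ hle (0, 0) ⟨⟨le_rfl, pi_pos.le⟩, self_mem_Ici⟩
  set H := max (p.2 + 1) (M / ε)
  have hH : 0 < H := by linarith [le_max_left (p.2 + 1) (M / ε), hp.2.out]
  set Ω := Ioo 0 π ×ˢ Ioo 0 H
  set w := v - ((√2 * M) • halfStripBarrier + ε • Prod.snd)
  have hw_apply : ∀ q, w q = v q - √2 * M * halfStripBarrier q - ε * q.2 := fun q => by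
    simp only [Pi.sub_apply, Pi.add_apply, Pi.smul_apply, smul_eq_mul, w]
    ring
  have hstrip : IsOpen (Ioo 0 π ×ˢ Ioi (0 : ℝ)) := isOpen_Ioo.prod isOpen_Ioi
  have hw : HarmonicOn w Ω :=
    (hv.sub hstrip (((harmonicOn_halfStripBarrier _).const_smul _).add hstrip
      ((harmonicOn_snd _).const_smul ε))).mono (prod_mono subset_rfl Ioo_subset_Ioi_self)
  have hclosure : closure Ω = Icc 0 π ×ˢ Icc 0 H := by
    rw [closure_prod_eq, closure_Ioo pi_ne_zero.symm, closure_Ioo hH.ne]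
  have hwc : ContinuousOn w (closure Ω) := by
    rw [hclosure]
    exact (hc.mono (prod_mono subset_rfl Icc_subset_Ici_self)).sub
      (by unfold halfStripBarrier; fun_prop)
  have hbarrier : ∀ q : ℝ × ℝ, q.1 ∈ Icc 0 π →
      √2 * M * (√2 / 2 * exp (-(q.2 / 2))) ≤ √2 * M * halfStripBarrier q :=
    fun q hq => mul_le_mul_of_nonneg_left (halfStripBarrier_bounds hq).1 (by positivity)
  have hbarrier_nonneg : ∀ q : ℝ × ℝ, q.1 ∈ Icc 0 π → 0 ≤ √2 * M * halfStripBarrier q :=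
    fun q hq => le_trans (by positivity) (hbarrier q hq)
  have hfront : ∀ q ∈ frontier Ω, w q ≤ 0 := by
    rw [frontier_prod_eq, closure_Ioo pi_ne_zero.symm, closure_Ioo hH.ne, frontier_Ioo pi_pos,
      frontier_Ioo hH]
    rintro ⟨x, y⟩ (⟨hx, rfl | rfl⟩ | ⟨rfl | rfl, hy⟩) <;> rw [hw_apply]
    · have hbottom : √2 * M * (√2 / 2 * exp (-((0 : ℝ) / 2))) = M := by
        simp only [zero_div, neg_zero, exp_zero, mul_one]
        linear_combination M / 2 * mul_self_sqrt (zero_le_two (α := ℝ))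
      linarith [hle (x, 0) ⟨hx, self_mem_Ici⟩, hbarrier (x, 0) hx]
    · have htop : M ≤ ε * H := (div_le_iff₀' hε).1 (le_max_right _ _)
      linarith [hle (x, H) ⟨hx, hH.le⟩, hbarrier_nonneg (x, H) hx]
    · linarith [(hside y hy.1).1, hbarrier_nonneg (0, y) ⟨le_rfl, pi_pos.le⟩,
        mul_nonneg hε.le hy.1]
    · linarith [(hside y hy.1).2, hbarrier_nonneg (π, y) ⟨pi_pos.le, le_rfl⟩,
        mul_nonneg hε.le hy.1]
  have hpΩ : p ∈ closure Ω :=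
    subset_closure ⟨hp.1, hp.2, by linarith [le_max_left (p.2 + 1) (M / ε)]⟩
  have := hw.le_on_closure (isOpen_Ioo.prod isOpen_Ioo)
    ((Metric.isBounded_Ioo 0 π).prod (Metric.isBounded_Ioo 0 H)) hwc hfront p hpΩ
  linarith [hw_apply p]

theorem HarmonicOn.le_exp_of_halfStrip (hc : ContinuousOn v (Icc 0 π ×ˢ Ici 0))
    (hv : HarmonicOn v (Ioo 0 π ×ˢ Ioi 0)) (hle : ∀ p ∈ Icc 0 π ×ˢ Ici 0, v p ≤ M)
    (hside : ∀ η : ℝ, 0 ≤ η → v (0, η) = 0 ∧ v (π, η) = 0)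
    {p : ℝ × ℝ} (hp : p ∈ Ioo 0 π ×ˢ Ioi 0) : v p ≤ √2 * M * exp (-(p.2 / 2)) := by
  have hM : 0 ≤ M := (hside 0 le_rfl).1 ▸ hle (0, 0) ⟨⟨le_rfl, pi_pos.le⟩, self_mem_Ici⟩
  have hB : v p ≤ √2 * M * halfStripBarrier p := by
    refine le_of_forall_pos_le_add fun ε hε => ?_
    simpa [div_mul_cancel₀ ε hp.2.ne'] using
      hv.le_halfStripBarrier_add hc hle hside (div_pos hε hp.2) hp
  exact hB.trans (mul_le_mul_of_nonneg_left
    (halfStripBarrier_bounds ⟨hp.1.1.le, hp.1.2.le⟩).2 (by positivity))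

end

/-- A bounded continuous function on the closed half-strip `[0,π] × [0,∞)`, harmonic inside
and vanishing on the two lateral sides, decays exponentially: `|U(ξ,η)| ≤ C e^{-Aη}`. -/
theorem stmt15 (U : ℝ × ℝ → ℝ)
    (hcont : ContinuousOn U (closure (Set.Ioo 0 π ×ˢ Set.Ioi (0 : ℝ))))
    (hbdd : ∃ M : ℝ, ∀ p ∈ closure (Set.Ioo 0 π ×ˢ Set.Ioi (0 : ℝ)), |U p| ≤ M)
    (hharm : HarmonicOn U (Set.Ioo 0 π ×ˢ Set.Ioi (0 : ℝ)))
    (hside : ∀ η : ℝ, 0 ≤ η → U (0, η) = 0 ∧ U (π, η) = 0) :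
    ∃ A > 0, ∃ C > 0, ∀ p ∈ Set.Ioo 0 π ×ˢ Set.Ioi (0 : ℝ),
      |U p| ≤ C * Real.exp (-A * p.2) := by
  obtain ⟨M, hM⟩ := hbdd
  rw [closure_prod_eq, closure_Ioo pi_ne_zero.symm, closure_Ioi] at hcont hM
  have hM0 : 0 ≤ M := (abs_nonneg _).trans (hM (0, 0) ⟨⟨le_rfl, pi_pos.le⟩, self_mem_Ici⟩)
  refine ⟨1 / 2, by norm_num, √2 * M + 1, by positivity, fun p hp => ?_⟩
  have hupper := hharm.le_exp_of_halfStrip hcont (fun q hq => (le_abs_self _).trans (hM q hq))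
    hside hp
  have hlower := (hharm.const_smul (-1)).le_exp_of_halfStrip (hcont.const_smul (-1))
    (fun q hq => by simpa using (neg_le_abs (U q)).trans (hM q hq))
    (fun η hη => by simp [hside η hη]) hp
  simp only [Pi.smul_apply, smul_eq_mul, neg_one_mul] at hlower
  have hexp : √2 * M * exp (-(p.2 / 2)) ≤ (√2 * M + 1) * exp (-(1 / 2) * p.2) := by
    rw [show -(1 / 2) * p.2 = -(p.2 / 2) by ring]
    gcongr
    linarith
  exact (abs_le.2 ⟨by linarith, hupper⟩).trans hexp
end
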